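/- arXiv:2401.12345 — 2 statements merged into one kernel-verified Lean document; each statement's English description precedes it below -/
import Mathlib

section
/- Let R̂, E ∈ ℂ^{(N+M)×(N+M)} be Hermitian positive semidefinite and ε₀ ≥ 0 be such that R̂ − ε₀E is positive semidefinite and the top-left N×N block of R̂ + ε₀E is positive definite. Then for every Hermitian R with R̂ − ε₀E ⪯ R ⪯ R̂ + ε₀E whose top-left N×N block R_x is positive definite, one has f1(R) ≤ f1(R̂ + ε₀E); i.e., the maximum of f1 over the additive moment uncertainty set is attained at the upper bound R̂ + ε₀E, so the distributionally robust beamformer is (R̂_xs + ε₀E_xs)ᴴ (R̂_x + ε₀E_x)⁻¹, where subscripts x and xs denote the corresponding blocks. -/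
/-!
For Hermitian `R` with positive definite top-left block, completing the square gives
`yᴴ (R / R₁₁) y = min_x (x, y)ᴴ R (x, y)`, the minimum being attained at `x = -R₁₁⁻¹ R₁₂ y`.
Hence `R ⪯ S` implies `R / R₁₁ ⪯ S / S₁₁` for the Schur complements, and taking traces shows
that `f1` is monotone in the Loewner order; so on the uncertainty set it is maximal at the
upper bound `R̂ + ε₀E`. The beamformer identity is the blockwise linearity of `toBlocks`.
-/

open Matrix
open scoped ComplexOrder

/-- The MMSE functional `f1(R) := Re Tr(R_s − R_xsᴴ R_x⁻¹ R_xs)` of a block matrix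
`R = [[R_x, R_xs],[R_xsᴴ, R_s]]`. -/
noncomputable def f1 {N M : ℕ} (R : Matrix (Fin N ⊕ Fin M) (Fin N ⊕ Fin M) ℂ) : ℝ :=
  ((R.toBlocks₂₂ - (R.toBlocks₁₂)ᴴ * (R.toBlocks₁₁)⁻¹ * R.toBlocks₁₂).trace).re

namespace Matrix

variable {m n 𝕜 : Type*} [Field 𝕜] [StarRing 𝕜] {R S : Matrix (m ⊕ n) (m ⊕ n) 𝕜}

theorem IsHermitian.fromBlocks_toBlocks_eq (hR : R.IsHermitian) :
    Matrix.fromBlocks R.toBlocks₁₁ R.toBlocks₁₂ R.toBlocks₁₂ᴴ R.toBlocks₂₂ = R := by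
  rw [← fromBlocks_toBlocks R, isHermitian_fromBlocks_iff] at hR
  rw [hR.2.1, fromBlocks_toBlocks]

theorem IsHermitian.toBlocks₁₁ (hR : R.IsHermitian) : R.toBlocks₁₁.IsHermitian :=
  congr_arg Matrix.toBlocks₁₁ hR

variable [Fintype m] [DecidableEq m]

noncomputable def schurCompl₁₁ (R : Matrix (m ⊕ n) (m ⊕ n) 𝕜) : Matrix n n 𝕜 :=
  R.toBlocks₂₂ - R.toBlocks₁₂ᴴ * R.toBlocks₁₁⁻¹ * R.toBlocks₁₂

theorem IsHermitian.schurCompl₁₁ (hR : R.IsHermitian) : (Matrix.schurCompl₁₁ R).IsHermitian :=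
  (IsHermitian.fromBlocks₁₁ _ _ hR.toBlocks₁₁).mp (by rwa [hR.fromBlocks_toBlocks_eq])

variable [Fintype n]

theorem IsHermitian.dotProduct_mulVec_sumElim (hR : R.IsHermitian) [Invertible R.toBlocks₁₁]
    (x : m → 𝕜) (y : n → 𝕜) :
    star (x ⊕ᵥ y) ⬝ᵥ R *ᵥ (x ⊕ᵥ y) =
      star (x + (R.toBlocks₁₁⁻¹ * R.toBlocks₁₂) *ᵥ y) ⬝ᵥ
          R.toBlocks₁₁ *ᵥ (x + (R.toBlocks₁₁⁻¹ * R.toBlocks₁₂) *ᵥ y) +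
        star y ⬝ᵥ Matrix.schurCompl₁₁ R *ᵥ y := by
  simpa only [dotProduct_mulVec, hR.fromBlocks_toBlocks_eq, Matrix.schurCompl₁₁] using
    schur_complement_eq₁₁ R.toBlocks₁₂ R.toBlocks₂₂ x y hR.toBlocks₁₁

variable [PartialOrder 𝕜] [StarOrderedRing 𝕜]

theorem schurCompl₁₁_sub_posSemidef (hR : R.IsHermitian) (hRS : (S - R).PosSemidef)
    (hR₁₁ : R.toBlocks₁₁.PosDef) (hS₁₁ : S.toBlocks₁₁.PosDef) :
    (schurCompl₁₁ S - schurCompl₁₁ R).PosSemidef := by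
  have hS : S.IsHermitian := by simpa using hRS.isHermitian.add hR
  have := hR₁₁.isUnit.invertible
  have := hS₁₁.isUnit.invertible
  refine .of_dotProduct_mulVec_nonneg (hS.schurCompl₁₁.sub hR.schurCompl₁₁) fun y => ?_
  rw [sub_mulVec, dotProduct_sub, sub_nonneg]
  -- `x` cancels the completed square of `S`, leaving only the Schur complement term
  let x := -((S.toBlocks₁₁⁻¹ * S.toBlocks₁₂) *ᵥ y)
  calc star y ⬝ᵥ schurCompl₁₁ R *ᵥ y
      ≤ star (x ⊕ᵥ y) ⬝ᵥ R *ᵥ (x ⊕ᵥ y) := by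
        rw [hR.dotProduct_mulVec_sumElim]
        exact le_add_of_nonneg_left (hR₁₁.posSemidef.dotProduct_mulVec_nonneg _)
    _ ≤ star (x ⊕ᵥ y) ⬝ᵥ S *ᵥ (x ⊕ᵥ y) := by
        simpa [sub_mulVec] using hRS.dotProduct_mulVec_nonneg (x ⊕ᵥ y)
    _ = star y ⬝ᵥ schurCompl₁₁ S *ᵥ y := by
        simp [hS.dotProduct_mulVec_sumElim, x]

end Matrix

theorem additive_moment_worst_case_general {N M : ℕ}
    (Rhat E : Matrix (Fin N ⊕ Fin M) (Fin N ⊕ Fin M) ℂ)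
    (ε₀ : ℝ)
    (hupx : ((Rhat + ε₀ • E).toBlocks₁₁).PosDef) :
    (∀ R : Matrix (Fin N ⊕ Fin M) (Fin N ⊕ Fin M) ℂ, R.IsHermitian →
        (R - (Rhat - ε₀ • E)).PosSemidef → ((Rhat + ε₀ • E) - R).PosSemidef →
        R.toBlocks₁₁.PosDef →
        f1 R ≤ f1 (Rhat + ε₀ • E))
    ∧ ((Rhat + ε₀ • E).toBlocks₁₂)ᴴ * ((Rhat + ε₀ • E).toBlocks₁₁)⁻¹
        = (Rhat.toBlocks₁₂ + ε₀ • E.toBlocks₁₂)ᴴ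
            * (Rhat.toBlocks₁₁ + ε₀ • E.toBlocks₁₁)⁻¹ := by
  refine ⟨fun R hR _ hRS hR₁₁ => ?_, rfl⟩
  show (schurCompl₁₁ R).trace.re ≤ (schurCompl₁₁ (Rhat + ε₀ • E)).trace.re
  have hmono := (schurCompl₁₁_sub_posSemidef hR hRS hR₁₁ hupx).trace_nonneg
  rw [trace_sub, sub_nonneg] at hmono
  exact Complex.re_le_re hmono

/-- Over the additive moment uncertainty set `R̂ − ε₀E ⪯ R ⪯ R̂ + ε₀E`, the maximum of
`f1` is attained at the upper bound `R̂ + ε₀E`; the corresponding distributionally robust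
beamformer is `(R̂_xs + ε₀E_xs)ᴴ (R̂_x + ε₀E_x)⁻¹`. -/
theorem additive_moment_worst_case {N M : ℕ}
    (Rhat E : Matrix (Fin N ⊕ Fin M) (Fin N ⊕ Fin M) ℂ)
    (hRhat : Rhat.PosSemidef) (hE : E.PosSemidef)
    (ε₀ : ℝ) (hε : 0 ≤ ε₀)
    (hlow : (Rhat - ε₀ • E).PosSemidef)
    (hupx : ((Rhat + ε₀ • E).toBlocks₁₁).PosDef) :
    (∀ R : Matrix (Fin N ⊕ Fin M) (Fin N ⊕ Fin M) ℂ, R.IsHermitian →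
        (R - (Rhat - ε₀ • E)).PosSemidef → ((Rhat + ε₀ • E) - R).PosSemidef →
        R.toBlocks₁₁.PosDef →
        f1 R ≤ f1 (Rhat + ε₀ • E))
    ∧ ((Rhat + ε₀ • E).toBlocks₁₂)ᴴ * ((Rhat + ε₀ • E).toBlocks₁₁)⁻¹
        = (Rhat.toBlocks₁₂ + ε₀ • E.toBlocks₁₂)ᴴ
            * (Rhat.toBlocks₁₁ + ε₀ • E.toBlocks₁₁)⁻¹ :=
  additive_moment_worst_case_general Rhat E ε₀ hupx
end

section
/- Fix W ∈ ℂ^{M×N}, a Hermitian positive semidefinite matrix F ∈ ℂ^{N×N}, and ε₀ ≥ 0. Then the supremum of Tr(W D_x Wᴴ) over all Hermitian matrices D_x with 0 ⪯ D_x ⪯ ε₀F equals ε₀ Tr(W F Wᴴ), attained at D_x = ε₀F. Consequently, for nominal matrices R̂_x, R̂_xs, R̂_s, the data-perturbed objective Tr(W (R̂_x + D_x) Wᴴ − W R̂_xs − R̂_xsᴴ Wᴴ + R̂_s + D_s), arising when the feature perturbation has second moment D_x and the label perturbation has second moment D_s with vanishing cross-correlations, satisfies sup over {D_x : 0 ⪯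 D_x ⪯ ε₀F} equals g(W; R̂_x, R̂_xs, R̂_s) + ε₀ Tr(W F Wᴴ) + Tr(D_s); thus distributionally robust learning under diagonal data perturbation (F = I_N) again yields ridge regression and, for general F, Tikhonov regularization. -/
open Matrix
open scoped ComplexOrder

/-! The map `D ↦ Re Tr(W D Wᴴ)` is linear and sends positive semidefinite matrices to
nonnegative numbers, hence is monotone for the Loewner order; so on `0 ⪯ D ⪯ ε₀F` it is
maximised at the top element `D = ε₀F`. The perturbed objective is the nominal one plus
`Re Tr(W D_x Wᴴ) + Re Tr(D_s)`, so its worst case follows. -/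

namespace Matrix

variable {m n 𝕜 : Type*} [Fintype m] [Fintype n] [RCLike 𝕜]

lemma PosSemidef.re_trace_nonneg {A : Matrix n n 𝕜} (hA : A.PosSemidef) :
    0 ≤ RCLike.re A.trace :=
  (RCLike.nonneg_iff.mp hA.trace_nonneg).1

lemma re_trace_mul_smul_mul_conjTranspose (W : Matrix m n 𝕜) (c : ℝ) (F : Matrix n n 𝕜) :
    RCLike.re (W * (c • F) * Wᴴ).trace = c * RCLike.re (W * F * Wᴴ).trace := by
  rw [Matrix.mul_smul, Matrix.smul_mul, trace_smul, RCLike.smul_re]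

lemma re_trace_mul_mul_conjTranspose_le_of_posSemidef_sub (W : Matrix m n 𝕜)
    {A B : Matrix n n 𝕜} (hAB : (B - A).PosSemidef) :
    RCLike.re (W * A * Wᴴ).trace ≤ RCLike.re (W * B * Wᴴ).trace := by
  have h := (hAB.mul_mul_conjTranspose_same W).re_trace_nonneg
  rwa [Matrix.mul_sub, Matrix.sub_mul, trace_sub, map_sub, sub_nonneg] at h

lemma re_trace_perturbed_objective (W : Matrix m n 𝕜) (Rx D : Matrix n n 𝕜)
    (Rxs : Matrix n m 𝕜) (Rs Ds : Matrix m m 𝕜) :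
    RCLike.re (W * (Rx + D) * Wᴴ - W * Rxs - Rxsᴴ * Wᴴ + Rs + Ds).trace
      = RCLike.re (W * Rx * Wᴴ - W * Rxs - Rxsᴴ * Wᴴ + Rs).trace
        + RCLike.re (W * D * Wᴴ).trace + RCLike.re Ds.trace := by
  rw [← map_add, ← map_add, ← trace_add, ← trace_add, Matrix.mul_add, Matrix.add_mul]
  congr 3
  abel

end Matrix

theorem data_augmentation_ridge_general {N M : ℕ}
    (W : Matrix (Fin M) (Fin N) ℂ)
    (F : Matrix (Fin N) (Fin N) ℂ)
    (ε₀ : ℝ)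
    (Rhatx : Matrix (Fin N) (Fin N) ℂ) (Rhatxs : Matrix (Fin N) (Fin M) ℂ)
    (Rhats Ds : Matrix (Fin M) (Fin M) ℂ) :
    (∀ Dx : Matrix (Fin N) (Fin N) ℂ, Dx.PosSemidef → (ε₀ • F - Dx).PosSemidef →
        ((W * Dx * Wᴴ).trace).re ≤ ε₀ * ((W * F * Wᴴ).trace).re)
    ∧ ((W * (ε₀ • F) * Wᴴ).trace).re = ε₀ * ((W * F * Wᴴ).trace).re
    ∧ (∀ Dx : Matrix (Fin N) (Fin N) ℂ, Dx.PosSemidef → (ε₀ • F - Dx).PosSemidef →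
        ((W * (Rhatx + Dx) * Wᴴ - W * Rhatxs - Rhatxsᴴ * Wᴴ + Rhats + Ds).trace).re
          ≤ ((W * Rhatx * Wᴴ - W * Rhatxs - Rhatxsᴴ * Wᴴ + Rhats).trace).re
              + ε₀ * ((W * F * Wᴴ).trace).re + (Ds.trace).re)
    ∧ ((W * (Rhatx + ε₀ • F) * Wᴴ - W * Rhatxs - Rhatxsᴴ * Wᴴ + Rhats + Ds).trace).re
        = ((W * Rhatx * Wᴴ - W * Rhatxs - Rhatxsᴴ * Wᴴ + Rhats).trace).re
            + ε₀ * ((W * F * Wᴴ).trace).re + (Ds.trace).re := by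
  have top := re_trace_mul_smul_mul_conjTranspose W ε₀ F
  have bound : ∀ Dx : Matrix (Fin N) (Fin N) ℂ, (ε₀ • F - Dx).PosSemidef →
      ((W * Dx * Wᴴ).trace).re ≤ ε₀ * ((W * F * Wᴴ).trace).re := fun Dx hDx =>
    top ▸ re_trace_mul_mul_conjTranspose_le_of_posSemidef_sub W hDx
  refine ⟨fun Dx _ hDx => bound Dx hDx, top, fun Dx _ hDx => ?_, ?_⟩
  · have := re_trace_perturbed_objective W Rhatx Dx Rhatxs Rhats Ds
    have := bound Dx hDx
    simp only [RCLike.re_to_complex] at *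
    linarith
  · have := re_trace_perturbed_objective W Rhatx (ε₀ • F) Rhatxs Rhats Ds
    simp only [RCLike.re_to_complex] at *
    linarith

/-- Data augmentation for linear regression: the supremum of `Tr(W D_x Wᴴ)` over
Hermitian `0 ⪯ D_x ⪯ ε₀F` equals `ε₀ Tr(W F Wᴴ)`, attained at `D_x = ε₀F`; consequently
the data-perturbed objective `Tr(W (R̂_x + D_x) Wᴴ − W R̂_xs − R̂_xsᴴ Wᴴ + R̂_s + D_s)`
has worst case `g(W; R̂_x, R̂_xs, R̂_s) + ε₀ Tr(W F Wᴴ) + Tr(D_s)`, i.e. ridge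
(`F = I`) / Tikhonov regularization. -/
theorem data_augmentation_ridge {N M : ℕ}
    (W : Matrix (Fin M) (Fin N) ℂ)
    (F : Matrix (Fin N) (Fin N) ℂ) (hF : F.PosSemidef)
    (ε₀ : ℝ) (hε : 0 ≤ ε₀)
    (Rhatx : Matrix (Fin N) (Fin N) ℂ) (Rhatxs : Matrix (Fin N) (Fin M) ℂ)
    (Rhats Ds : Matrix (Fin M) (Fin M) ℂ) :
    (∀ Dx : Matrix (Fin N) (Fin N) ℂ, Dx.PosSemidef → (ε₀ • F - Dx).PosSemidef →
        ((W * Dx * Wᴴ).trace).re ≤ ε₀ * ((W * F * Wᴴ).trace).re)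
    ∧ ((W * (ε₀ • F) * Wᴴ).trace).re = ε₀ * ((W * F * Wᴴ).trace).re
    ∧ (∀ Dx : Matrix (Fin N) (Fin N) ℂ, Dx.PosSemidef → (ε₀ • F - Dx).PosSemidef →
        ((W * (Rhatx + Dx) * Wᴴ - W * Rhatxs - Rhatxsᴴ * Wᴴ + Rhats + Ds).trace).re
          ≤ ((W * Rhatx * Wᴴ - W * Rhatxs - Rhatxsᴴ * Wᴴ + Rhats).trace).re
              + ε₀ * ((W * F * Wᴴ).trace).re + (Ds.trace).re)
    ∧ ((W * (Rhatx + ε₀ • F) * Wᴴ - W * Rhatxs - Rhatxsᴴ * Wᴴ + Rhats + Ds).trace).re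
        = ((W * Rhatx * Wᴴ - W * Rhatxs - Rhatxsᴴ * Wᴴ + Rhats).trace).re
            + ε₀ * ((W * F * Wᴴ).trace).re + (Ds.trace).re :=
  data_augmentation_ridge_general W F ε₀ Rhatx Rhatxs Rhats Ds
end
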